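/- Let G be a finitely generated, residually finite group such that the function rk − 1 is multiplicative on G, i.e. for every pair of subgroups G₂ ≤ G₁ of G with G₂ of finite index in G one has rk(G₂) − 1 = [G₁ : G₂] · (rk(G₁) − 1). Then G is a free group. -/

import Mathlib

/-- The rank of a subgroup `H` of `G`: the minimal cardinality of a subset of `G`
generating `H`. -/
noncomputable def subgroupRank {G : Type*} [Group G] (H : Subgroup G) : ℕ :=
  sInf {n : ℕ | ∃ S : Finset G, S.card = n ∧ Subgroup.closure (S : Set G) = H}

/-
Write `d = rk G`, let `S` be a generating set of size `d` and `π : F(S) → G` the induced map.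
If `π` is not injective, pick a nontrivial `w ∈ ker π` of minimal length. Its proper subwords are
nontrivial in `G`, so residual finiteness yields a normal subgroup `H` of finite index `n` modulo
which all prefixes of `w` are distinct: `w` traces a simple cycle in the Schreier graph of
`K = π⁻¹ H` (`n` vertices, `n d` edges). For a transversal built along a spanning tree, the
Schreier generators of the `n d - (n - 1)` non-tree edges generate `K`; the cycle crosses some
non-tree edge exactly once, and the relation `π w = 1` makes its generator redundant in `H = π K`.
Hence `rk H ≤ n (d - 1)`, whereas multiplicativity forces `rk H = n (d - 1) + 1`.
-/

open Subgroup

section Generators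

variable {E G : Type*} [Group G]

lemma mem_closure_image_compl_of_prod_eq_one (g : E → G) {l : List (E × Bool)}
    (hl : (l.map Prod.fst).Nodup) (hprod : (l.map fun s => cond s.2 (g s.1) (g s.1)⁻¹).prod = 1)
    {e : E} (he : e ∈ l.map Prod.fst) : g e ∈ closure (g '' {e}ᶜ) := by
  set σ : E × Bool → G := fun s => cond s.2 (g s.1) (g s.1)⁻¹
  obtain ⟨⟨e, b⟩, hs, rfl⟩ := List.mem_map.mp he
  obtain ⟨l₁, l₂, rfl⟩ := List.append_of_mem hs
  have hne : e ∉ (l₁ ++ l₂).map Prod.fst := by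
    rw [List.map_append, List.map_cons, List.nodup_middle, List.nodup_cons] at hl
    simpa using hl.1
  have hσ : ∀ l' ⊆ l₁ ++ l₂, (l'.map σ).prod ∈ closure (g '' {e}ᶜ) := by
    refine fun l' hl' => list_prod_mem fun x hx => ?_
    obtain ⟨s, hs, rfl⟩ := List.mem_map.mp hx
    have hg : g s.1 ∈ closure (g '' {e}ᶜ) :=
      subset_closure ⟨s.1, fun h => hne (h ▸ List.mem_map_of_mem (hl' hs)), rfl⟩
    cases hb : s.2
    · simpa [σ, hb] using inv_mem hg
    · simpa [σ, hb] using hg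
  have hb : σ (e, b) = (l₁.map σ).prod⁻¹ * (l₂.map σ).prod⁻¹ := by
    rw [List.map_append, List.map_cons, List.prod_append, List.prod_cons] at hprod
    rw [eq_inv_mul_iff_mul_eq, ← mul_inv_eq_one, inv_inv, mul_assoc]
    exact hprod
  have hb' : σ (e, b) ∈ closure (g '' {e}ᶜ) := by
    rw [hb]
    exact mul_mem (inv_mem (hσ l₁ (List.subset_append_left _ _)))
      (inv_mem (hσ l₂ (List.subset_append_right _ _)))
  cases b
  · simpa [σ] using inv_mem hb'
  · exact hb'

lemma closure_image_compl_insert_eq (g : E → G) {B : Set E} (hB : ∀ e ∈ B, g e = 1) {e₀ : E}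
    (he₀ : g e₀ ∈ closure (g '' {e₀}ᶜ)) :
    closure (g '' (insert e₀ B)ᶜ) = closure (Set.range g) := by
  refine le_antisymm (closure_mono (Set.image_subset_range _ _)) ?_
  have hsub : g '' {e₀}ᶜ ⊆ closure (g '' (insert e₀ B)ᶜ) := by
    rintro - ⟨e, he, rfl⟩
    by_cases heB : e ∈ B
    · rw [hB e heB]
      exact one_mem _
    · exact subset_closure ⟨e, by simp_all, rfl⟩
  rw [closure_le]
  rintro - ⟨e, rfl⟩
  by_cases he : e = e₀
  · subst he
    exact (closure_le _).mpr hsub he₀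
  · exact hsub ⟨e, he, rfl⟩

lemma exists_normal_finiteIndex_forall_notMem
    (hres : ∀ g : G, g ≠ 1 → ∃ N : Subgroup G, N.Normal ∧ N.FiniteIndex ∧ g ∉ N)
    {X : Set G} (hX : X.Finite) (h1 : (1 : G) ∉ X) :
    ∃ N : Subgroup G, N.Normal ∧ N.FiniteIndex ∧ ∀ x ∈ X, x ∉ N := by
  choose N hN using fun x : X => hres x (ne_of_mem_of_not_mem x.2 h1)
  have := hX.to_subtype
  refine ⟨⨅ x, N x, normal_iInf_normal fun x => (hN x).1,
    finiteIndex_iInf fun x => (hN x).2.1, fun x hx hmem => (hN ⟨x, hx⟩).2.2 ?_⟩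
  exact iInf_le N ⟨x, hx⟩ hmem

end Generators

lemma subgroupRank_le_card {G : Type*} [Group G] {H : Subgroup G} {S : Finset G}
    (hS : closure (S : Set G) = H) : subgroupRank H ≤ S.card :=
  Nat.sInf_le ⟨S, rfl, hS⟩

lemma Subgroup.FG.exists_card_eq_subgroupRank {G : Type*} [Group G] {H : Subgroup G} (hH : H.FG) :
    ∃ S : Finset G, S.card = subgroupRank H ∧ closure (S : Set G) = H := by
  obtain ⟨S, hS⟩ := hH
  have hne : {n : ℕ | ∃ S : Finset G, S.card = n ∧ closure (S : Set G) = H}.Nonempty :=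
    ⟨S.card, S, rfl, hS⟩
  exact Nat.sInf_mem hne

namespace FreeGroup

lemma mk_singleton_true {T : Type*} (t : T) : mk [(t, true)] = of t := rfl

lemma mk_singleton_false {T : Type*} (t : T) : mk [(t, false)] = (of t)⁻¹ := by
  simp [inv_mk, invRev, of]

lemma mk_singleton_not {T : Type*} (x : T × Bool) : mk [(x.1, !x.2)] = (mk [x])⁻¹ := by
  simp [inv_mk, invRev]

section SchreierGraph

variable {T : Type*} (K : Subgroup (FreeGroup T))

lemma mk_take_eq_mk_take {L : List (T × Bool)}
    (hL : ∀ M, M <:+: L → M ≠ [] → M ≠ L → mk M ∉ K) {i j : ℕ} (hij : i < j) (hj : j ≤ L.length)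
    (h : (mk (L.take i) : FreeGroup T ⧸ K) = mk (L.take j)) : i = 0 ∧ j = L.length := by
  have hsplit : L.take j = L.take i ++ (L.take j).drop i := by
    conv_lhs => rw [← List.take_append_drop i (L.take j)]
    rw [List.take_take, min_eq_left hij.le]
  have hmem : mk ((L.take j).drop i) ∈ K := by
    rwa [QuotientGroup.eq, hsplit, ← mul_mk, inv_mul_cancel_left] at h
  by_contra hne
  refine hL _ ((List.drop_suffix i _).isInfix.trans (List.take_prefix j L).isInfix)
    (List.ne_nil_of_length_pos (by simp; omega)) (fun heq => hne ?_) hmem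
  have := congrArg List.length heq
  simp at this
  omega

variable [K.Normal]

/-- The edge `(p, t)` of the Schreier graph joins `p` to `p * t`; this is the edge crossed when
the letter `x` is read at the vertex `q`. -/
def letterEdge (q : FreeGroup T ⧸ K) (x : T × Bool) : (FreeGroup T ⧸ K) × T :=
  cond x.2 (q, x.1) (q * (mk [x] : FreeGroup T ⧸ K), x.1)

lemma letterEdge_eq_letterEdge {p q : FreeGroup T ⧸ K} {x y : T × Bool}
    (h : letterEdge K p x = letterEdge K q y) :
    (x = y ∧ p = q) ∨ (y = (x.1, !x.2) ∧ p * (mk [x] : FreeGroup T ⧸ K) = q) := by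
  obtain ⟨t, _ | _⟩ := x <;> obtain ⟨s, _ | _⟩ := y <;>
    simp only [letterEdge, cond_true, cond_false, Prod.mk.injEq] at h <;>
    obtain ⟨hv, rfl⟩ := h <;> simp_all [mk_singleton_false, mk_singleton_true]

/-- The walk in the Schreier graph that reads `L` from `q`: each edge it crosses, together with
`true` if it is crossed from `p` to `p * t` and `false` if backwards. -/
def pathSteps : (FreeGroup T ⧸ K) → List (T × Bool) → List (((FreeGroup T ⧸ K) × T) × Bool)
  | _, [] => []
  | q, x :: L => (letterEdge K q x, x.2) :: pathSteps (q * (mk [x] : FreeGroup T ⧸ K)) L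

@[simp] lemma length_pathSteps (q : FreeGroup T ⧸ K) (L : List (T × Bool)) :
    (pathSteps K q L).length = L.length := by
  induction L generalizing q <;> simp_all [pathSteps]

lemma getElem_pathSteps (q : FreeGroup T ⧸ K) (L : List (T × Bool)) (i : ℕ) (hi : i < L.length) :
    (pathSteps K q L)[i]'(by simpa using hi) =
      (letterEdge K (q * (mk (L.take i) : FreeGroup T ⧸ K)) L[i], L[i].2) := by
  induction L generalizing q i with
  | nil => simp at hi
  | cons x L ih =>
    cases i with
    | zero => simp [pathSteps, ← one_eq_mk]
    | succ i =>
      simp only [pathSteps, List.getElem_cons_succ, ih _ _ (Nat.lt_of_succ_lt_succ hi)]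
      simp [mul_assoc, ← QuotientGroup.mk_mul]

lemma nodup_pathSteps {L : List (T × Bool)} (hred : IsReduced L)
    (hL : ∀ M, M <:+: L → M ≠ [] → M ≠ L → mk M ∉ K) :
    ((pathSteps K 1 L).map Prod.fst).Nodup := by
  rw [List.nodup_iff_getElem?_ne_getElem?]
  intro i j hij hj h
  rw [List.length_map, length_pathSteps] at hj
  have hi := hij.trans hj
  rw [List.getElem?_map, List.getElem?_map, List.getElem?_eq_getElem (by simpa using hi),
    List.getElem?_eq_getElem (by simpa using hj), Option.map_some, Option.map_some,
    Option.some_inj, getElem_pathSteps K 1 L i hi, getElem_pathSteps K 1 L j hj] at h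
  simp only [one_mul] at h
  rcases letterEdge_eq_letterEdge K h with ⟨-, hv⟩ | ⟨hx, hv⟩
  · exact hj.ne (mk_take_eq_mk_take K hL hij hj.le hv).2
  · have hv' : (mk (L.take (i + 1)) : FreeGroup T ⧸ K) = mk (L.take j) := by
      rw [← hv, ← QuotientGroup.mk_mul, mul_mk, List.take_add_one, List.getElem?_eq_getElem hi]
      rfl
    obtain rfl : j = i + 1 := by
      by_contra hne
      have := mk_take_eq_mk_take K hL (by omega : i + 1 < j) hj.le hv'
      omega
    have := List.IsChain.getElem hred i hj
    simp [hx] at this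

end SchreierGraph

section SchreierTransversal

variable {T : Type*} [DecidableEq T] (K : Subgroup (FreeGroup T))

noncomputable def cosetNorm (q : FreeGroup T ⧸ K) : ℕ :=
  sInf (norm '' {u : FreeGroup T | (u : FreeGroup T ⧸ K) = q})

lemma cosetNorm_le_norm (u : FreeGroup T) : cosetNorm K u ≤ norm u :=
  Nat.sInf_le ⟨u, rfl, rfl⟩

lemma exists_norm_eq_cosetNorm (q : FreeGroup T ⧸ K) :
    ∃ u : FreeGroup T, (u : FreeGroup T ⧸ K) = q ∧ norm u = cosetNorm K q := by
  obtain ⟨u, hu⟩ := QuotientGroup.mk_surjective q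
  have hne : (norm '' {v : FreeGroup T | (v : FreeGroup T ⧸ K) = q}).Nonempty := ⟨_, u, hu, rfl⟩
  exact Nat.sInf_mem hne

variable [K.Normal]

lemma exists_parent {q : FreeGroup T ⧸ K} (hq : q ≠ 1) :
    ∃ px : (FreeGroup T ⧸ K) × (T × Bool),
      cosetNorm K px.1 < cosetNorm K q ∧ px.1 * (mk [px.2] : FreeGroup T ⧸ K) = q := by
  obtain ⟨u, rfl, hu⟩ := exists_norm_eq_cosetNorm K q
  obtain hnil | ⟨L, x, hL⟩ := u.toWord.eq_nil_or_concat
  · simp_all [toWord_eq_nil_iff]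
  refine ⟨(mk L, x), ?_, ?_⟩
  · calc cosetNorm K (mk L) ≤ L.length := (cosetNorm_le_norm K _).trans norm_mk_le
      _ < u.toWord.length := by simp [hL]
      _ = cosetNorm K u := hu
  · rw [← QuotientGroup.mk_mul, mul_mk, ← List.concat_eq_append, ← hL, mk_toWord]

noncomputable def schreierParent (q : FreeGroup T ⧸ K) (hq : q ≠ 1) :
    (FreeGroup T ⧸ K) × (T × Bool) :=
  (exists_parent K hq).choose

lemma cosetNorm_schreierParent_lt {q : FreeGroup T ⧸ K} (hq : q ≠ 1) :
    cosetNorm K (schreierParent K q hq).1 < cosetNorm K q :=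
  (exists_parent K hq).choose_spec.1

lemma schreierParent_mul {q : FreeGroup T ⧸ K} (hq : q ≠ 1) :
    (schreierParent K q hq).1 * (mk [(schreierParent K q hq).2] : FreeGroup T ⧸ K) = q :=
  (exists_parent K hq).choose_spec.2

open scoped Classical in
noncomputable def schreierRep (q : FreeGroup T ⧸ K) : FreeGroup T :=
  if hq : q = 1 then 1
  else schreierRep (schreierParent K q hq).1 * mk [(schreierParent K q hq).2]
termination_by cosetNorm K q
decreasing_by exact cosetNorm_schreierParent_lt K hq

@[simp] lemma schreierRep_one : schreierRep K 1 = 1 := by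
  rw [schreierRep, dif_pos rfl]

lemma schreierRep_of_ne_one {q : FreeGroup T ⧸ K} (hq : q ≠ 1) :
    schreierRep K q = schreierRep K (schreierParent K q hq).1 * mk [(schreierParent K q hq).2] := by
  rw [schreierRep, dif_neg hq]

@[simp] lemma mk_schreierRep (q : FreeGroup T ⧸ K) : (schreierRep K q : FreeGroup T ⧸ K) = q := by
  induction q using schreierRep.induct K with
  | case1 => simp
  | case2 q hq ih => rw [schreierRep_of_ne_one K hq, QuotientGroup.mk_mul, ih, schreierParent_mul]

noncomputable def schreierCocycle (q : FreeGroup T ⧸ K) (a : FreeGroup T) : FreeGroup T :=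
  schreierRep K q * a * (schreierRep K (q * a))⁻¹

lemma schreierCocycle_mul (q : FreeGroup T ⧸ K) (a b : FreeGroup T) :
    schreierCocycle K q (a * b) = schreierCocycle K q a * schreierCocycle K (q * a) b := by
  simp only [schreierCocycle, QuotientGroup.mk_mul, mul_assoc]
  group

lemma schreierCocycle_one_of_mem {a : FreeGroup T} (ha : a ∈ K) : schreierCocycle K 1 a = a := by
  simp [schreierCocycle, (QuotientGroup.eq_one_iff a).mpr ha]

lemma schreierCocycle_mem (q : FreeGroup T ⧸ K) (a : FreeGroup T) : schreierCocycle K q a ∈ K := by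
  rw [← QuotientGroup.eq_one_iff, schreierCocycle]
  simp

noncomputable def schreierGen (e : (FreeGroup T ⧸ K) × T) : FreeGroup T :=
  schreierCocycle K e.1 (of e.2)

lemma schreierGen_mem (e : (FreeGroup T ⧸ K) × T) : schreierGen K e ∈ K :=
  schreierCocycle_mem K _ _

lemma cond_schreierGen_letterEdge (q : FreeGroup T ⧸ K) (x : T × Bool) :
    cond x.2 (schreierGen K (letterEdge K q x)) (schreierGen K (letterEdge K q x))⁻¹ =
      schreierCocycle K q (mk [x]) := by
  obtain ⟨t, _ | _⟩ := x
  · simp [letterEdge, schreierGen, schreierCocycle, mk_singleton_false, mul_assoc]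
  · rfl

noncomputable def treeEdge (q : {q : FreeGroup T ⧸ K // q ≠ 1}) : (FreeGroup T ⧸ K) × T :=
  letterEdge K (schreierParent K q q.2).1 (schreierParent K q q.2).2

lemma schreierGen_treeEdge (q : {q : FreeGroup T ⧸ K // q ≠ 1}) :
    schreierGen K (treeEdge K q) = 1 := by
  have h := cond_schreierGen_letterEdge K (schreierParent K q q.2).1 (schreierParent K q q.2).2
  rw [schreierCocycle, schreierParent_mul, ← schreierRep_of_ne_one, mul_inv_cancel] at h
  cases hb : (schreierParent K q q.2).2.2 <;> simpa [treeEdge, hb] using h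

lemma treeEdge_injective : Function.Injective (treeEdge K) := by
  intro q q' h
  have hq := schreierParent_mul K q.2
  have hq' := schreierParent_mul K q'.2
  rcases letterEdge_eq_letterEdge K h with ⟨hx, hp⟩ | ⟨hx, hp⟩
  · rw [hx, hp, hq'] at hq
    exact Subtype.ext hq.symm
  · -- the two parent steps would be inverse to each other, so each coset is the parent of the other
    exfalso
    have hqp : (q' : FreeGroup T ⧸ K) = (schreierParent K q q.2).1 := by
      rw [← hq', hx, mk_singleton_not, ← hp, QuotientGroup.mk_inv, mul_inv_cancel_right]
    have h1 := cosetNorm_schreierParent_lt K q.2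
    have h2 := cosetNorm_schreierParent_lt K q'.2
    rw [← hp, hq] at h2
    rw [← hqp] at h1
    omega

lemma prod_pathSteps (q : FreeGroup T ⧸ K) (L : List (T × Bool)) :
    ((pathSteps K q L).map fun s => cond s.2 (schreierGen K s.1) (schreierGen K s.1)⁻¹).prod =
      schreierCocycle K q (mk L) := by
  induction L generalizing q with
  | nil => simp [pathSteps, schreierCocycle, ← one_eq_mk]
  | cons x L ih =>
    rw [pathSteps, List.map_cons, List.prod_cons, ih]
    exact (congrArg (· * _) (cond_schreierGen_letterEdge K q x)).trans
      (schreierCocycle_mul K q _ _).symm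

lemma prod_pathSteps_toWord {w : FreeGroup T} (hw : w ∈ K) :
    ((pathSteps K 1 w.toWord).map
      fun s => cond s.2 (schreierGen K s.1) (schreierGen K s.1)⁻¹).prod = w := by
  rw [prod_pathSteps, mk_toWord, schreierCocycle_one_of_mem K hw]

lemma exists_mem_pathSteps_notMem_range_treeEdge {w : FreeGroup T} (hw : w ∈ K) (hw₁ : w ≠ 1) :
    ∃ e ∈ (pathSteps K 1 w.toWord).map Prod.fst, e ∉ Set.range (treeEdge K) := by
  by_contra! h
  refine hw₁ (prod_pathSteps_toWord K hw ▸ List.prod_eq_one fun x hx => ?_)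
  obtain ⟨s, hs, rfl⟩ := List.mem_map.mp hx
  obtain ⟨q, hq⟩ := h s.1 (List.mem_map_of_mem hs)
  cases s.2 <;> simp [← hq, schreierGen_treeEdge]

lemma closure_range_schreierGen : closure (Set.range (schreierGen K)) = K := by
  refine le_antisymm ((closure_le K).mpr ?_) fun a ha => ?_
  · rintro - ⟨e, rfl⟩
    exact schreierGen_mem K e
  · rw [← schreierCocycle_one_of_mem K ha, ← mk_toWord (x := a), ← prod_pathSteps]
    refine list_prod_mem fun g hg => ?_
    obtain ⟨s, -, rfl⟩ := List.mem_map.mp hg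
    cases s.2
    · exact inv_mem (subset_closure ⟨_, rfl⟩)
    · exact subset_closure ⟨_, rfl⟩

open scoped Classical in
lemma card_sdiff_insert_treeEdge_add_card [Fintype T] [Fintype (FreeGroup T ⧸ K)]
    {e₀ : (FreeGroup T ⧸ K) × T} (he₀ : e₀ ∉ Set.range (treeEdge K)) :
    (Finset.univ \ insert e₀ (Finset.univ.image (treeEdge K))).card +
        Fintype.card (FreeGroup T ⧸ K) = Fintype.card (FreeGroup T ⧸ K) * Fintype.card T := by
  have htree : (Finset.univ.image (treeEdge K)).card + 1 = Fintype.card (FreeGroup T ⧸ K) := by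
    rw [Finset.card_image_of_injective _ (treeEdge_injective K), Finset.card_univ,
      Fintype.card_subtype_compl, Fintype.card_subtype_eq]
    have := Fintype.card_pos (α := FreeGroup T ⧸ K)
    omega
  have := Finset.card_sdiff_add_card_eq_card
    (Finset.subset_univ (insert e₀ (Finset.univ.image (treeEdge K))))
  rw [Finset.card_insert_of_notMem (by simpa using he₀), Finset.card_univ,
    Fintype.card_prod] at this
  omega

end SchreierTransversal

variable {T G : Type*} [DecidableEq T] [Group G]

lemma map_mk_ne_one_of_isInfix {π : FreeGroup T →* G} {w : FreeGroup T}
    (hmin : ∀ u, π u = 1 → u ≠ 1 → w.norm ≤ u.norm) {M : List (T × Bool)}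
    (hM : M <:+: w.toWord) (hM₀ : M ≠ []) (hMw : M ≠ w.toWord) : π (mk M) ≠ 1 := by
  have hlt : M.length < w.norm := hM.length_le.lt_of_ne fun h => hMw (hM.eq_of_length h)
  obtain ⟨L₁, L₂, hL⟩ := hM
  intro hπM
  by_cases hM₁ : mk M = 1
  · have hw : w = mk (L₁ ++ L₂) := by
      rw [← mk_toWord (x := w), ← hL, ← mul_mk, ← mul_mk, hM₁, mul_one, mul_mk]
    have hle : w.norm ≤ (L₁ ++ L₂).length := hw ▸ norm_mk_le
    have hlen := congrArg List.length hL
    have := List.length_pos_of_ne_nil hM₀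
    simp only [List.length_append] at hle hlen
    simp only [norm] at hle
    omega
  · have := hmin _ hπM hM₁
    have : (mk M).norm ≤ M.length := norm_mk_le
    omega

theorem subgroupRank_add_index_le [Fintype T] {π : FreeGroup T →* G}
    (hπ : Function.Surjective π) (H : Subgroup G) [H.Normal] [H.FiniteIndex] {w : FreeGroup T}
    (hw : π w = 1) (hw₁ : w ≠ 1)
    (hinfix : ∀ M, M <:+: w.toWord → M ≠ [] → M ≠ w.toWord → π (mk M) ∉ H) :
    subgroupRank H + H.index ≤ H.index * Fintype.card T := by
  classical
  set K := H.comap π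
  have hK : K.index = H.index := H.index_comap_of_surjective hπ
  have : K.FiniteIndex := ⟨hK ▸ FiniteIndex.index_ne_zero⟩
  let := K.fintypeQuotientOfFiniteIndex
  have hwK : w ∈ K := by simp [K, hw]
  obtain ⟨e₀, he₀, hnt⟩ := exists_mem_pathSteps_notMem_range_treeEdge K hwK hw₁
  have hred : (π ∘ schreierGen K) e₀ ∈ closure ((π ∘ schreierGen K) '' {e₀}ᶜ) := by
    refine mem_closure_image_compl_of_prod_eq_one _ (nodup_pathSteps K isReduced_toWord hinfix)
      ?_ he₀
    refine Eq.trans ?_ ((congrArg π (prod_pathSteps_toWord K hwK)).trans hw)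
    rw [map_list_prod, List.map_map]
    refine congrArg List.prod (List.map_congr_left fun s _ => ?_)
    cases hb : s.2 <;> simp [hb]
  set A := Finset.univ \ insert e₀ (Finset.univ.image (treeEdge K))
  have hA : closure ((A.image (π ∘ schreierGen K) : Finset G) : Set G) = H := by
    rw [Finset.coe_image, Finset.coe_sdiff, Finset.coe_univ, Finset.coe_insert, Finset.coe_image,
      Finset.coe_univ, Set.image_univ, ← Set.compl_eq_univ_sdiff,
      closure_image_compl_insert_eq _ (by rintro - ⟨q, rfl⟩; simp [schreierGen_treeEdge]) hred,
      Set.range_comp, ← MonoidHom.map_closure, closure_range_schreierGen,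
      map_comap_eq_self_of_surjective hπ]
  calc subgroupRank H + H.index ≤ A.card + H.index :=
        Nat.add_le_add_right ((subgroupRank_le_card hA).trans Finset.card_image_le) _
    _ = H.index * Fintype.card T := by
        rw [← hK, index_eq_card, Nat.card_eq_fintype_card]
        exact card_sdiff_insert_treeEdge_add_card K hnt

end FreeGroup

open FreeGroup in
/-- A finitely generated, residually finite group on which the function `rk - 1` is
multiplicative is free. -/
theorem free_of_rank_sub_one_multiplicative (G : Type*) [Group G] [Group.FG G]
    (hres : ∀ g : G, g ≠ 1 → ∃ N : Subgroup G, N.Normal ∧ N.FiniteIndex ∧ g ∉ N)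
    (hmult : ∀ G₁ G₂ : Subgroup G, G₂ ≤ G₁ → G₂.FiniteIndex →
      (subgroupRank G₂ : ℤ) - 1 = (Subgroup.relIndex G₂ G₁ : ℤ) * ((subgroupRank G₁ : ℤ) - 1)) :
    IsFreeGroup G := by
  classical
  obtain ⟨S, hS_card, hS⟩ := (Group.FG.out (G := G)).exists_card_eq_subgroupRank
  set π := FreeGroup.lift ((↑) : S → G)
  have hπ : Function.Surjective π := by
    rw [← MonoidHom.range_eq_top, FreeGroup.range_lift_eq_closure, Subtype.range_coe, hS]
  by_contra hfree
  have hker : ∃ w, π w = 1 ∧ w ≠ 1 := by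
    by_contra! h
    exact hfree (.ofMulEquiv (.ofBijective π ⟨(injective_iff_map_eq_one π).mpr h, hπ⟩))
  obtain ⟨w, ⟨hw, hw₁⟩, hmin⟩ := (measure FreeGroup.norm).wf.has_min _ hker
  set L := w.toWord
  obtain ⟨H, hHn, hHfi, hH⟩ := exists_normal_finiteIndex_forall_notMem hres
    (X := (fun M => π (mk M)) '' {M | M <:+: L ∧ M ≠ [] ∧ M ≠ L})
    ((L.sublists.finite_toSet.subset fun M hM => List.mem_sublists.mpr hM.1.sublist).image _)
    (fun ⟨M, ⟨h₁, h₂, h₃⟩, h⟩ => map_mk_ne_one_of_isInfix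
      (fun u hu hu₁ => not_lt.mp (hmin u ⟨hu, hu₁⟩)) h₁ h₂ h₃ h)
  have hrk := subgroupRank_add_index_le hπ H hw hw₁ fun M h₁ h₂ h₃ => hH _ ⟨M, ⟨h₁, h₂, h₃⟩, rfl⟩
  have hmul := hmult ⊤ H le_top hHfi
  rw [relIndex_top_right, ← hS_card] at hmul
  rw [Fintype.card_coe] at hrk
  zify at hrk
  linarith
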